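/- (Geodesic convexity of the Brascamp–Lieb objective.) Let (B, p) be a Brascamp–Lieb datum: B = (B₁, …, B_m) with Bⱼ an nⱼ×n real matrix and p = (p₁, …, p_m) with pⱼ > 0, satisfying the non-degeneracy conditions n = Σⱼ pⱼ·nⱼ and n = Σⱼ pⱼ·rank(Bⱼ). Then the function F_{B,p}(X) = Σⱼ pⱼ·log det(Bⱼ·X·Bⱼᵀ) − log det(X) is geodesically convex on the n×n positive definite cone: for every positive definite P and symmetric Q, the function t ↦ F_{B,p}(√P · exp(t·Q) · √P) is convex on ℝ. -/

import Mathlib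

open Matrix Finset

section
open scoped ComplexOrder

/-- The positive semidefinite square root of a positive semidefinite matrix, with the
definition it had in Mathlib (Dec 2024) under this name (since removed from Mathlib). -/
noncomputable def Matrix.PosSemidef.sqrt {n 𝕜 : Type*} [Fintype n] [RCLike 𝕜] [DecidableEq n]
    {A : Matrix n n 𝕜} (hA : A.PosSemidef) : Matrix n n 𝕜 :=
  (hA.1.eigenvectorUnitary : Matrix n n 𝕜) * diagonal ((↑) ∘ (√·) ∘ hA.1.eigenvalues) *
    (star (hA.1.eigenvectorUnitary : Matrix n n 𝕜))

end

section BLAux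

variable {k n : ℕ}

private lemma psd_det_nonneg {N : Matrix (Fin k) (Fin k) ℝ} (h : N.PosSemidef) : 0 ≤ N.det := by
  rw [h.isHermitian.det_eq_prod_eigenvalues]
  have := fun i => h.eigenvalues_nonneg i
  calc (0:ℝ) ≤ ∏ i, h.isHermitian.eigenvalues i := Finset.prod_nonneg fun i _ => this i
    _ = _ := by norm_num [RCLike.ofReal_real_eq_id]

private lemma psd_cdc (C : Matrix (Fin k) (Fin n) ℝ) {w : Fin n → ℝ} (hw : ∀ i, 0 ≤ w i) :
    (C * diagonal w * Cᵀ).PosSemidef := by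
  have h1 : (diagonal w).PosSemidef := posSemidef_diagonal_iff.mpr hw
  have h2 := h1.mul_mul_conjTranspose_same C
  rwa [conjTranspose_eq_transpose_of_trivial] at h2

private lemma det_cdc_eq_zero_iff (C : Matrix (Fin k) (Fin n) ℝ) {w : Fin n → ℝ}
    (hw : ∀ i, 0 < w i) :
    (C * diagonal w * Cᵀ).det = 0 ↔ ∃ v, v ≠ 0 ∧ Cᵀ *ᵥ v = 0 := by
  rw [← Matrix.exists_mulVec_eq_zero_iff]
  constructor
  · rintro ⟨v, hv, hv0⟩
    refine ⟨v, hv, ?_⟩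
    have h0 : v ⬝ᵥ ((C * diagonal w * Cᵀ) *ᵥ v) = 0 := by rw [hv0, dotProduct_zero]
    rw [dotProduct_mulVec, ← Matrix.vecMul_vecMul, ← Matrix.vecMul_vecMul,
      Matrix.vecMul_transpose, dotProduct_comm, dotProduct_mulVec] at h0
    set y := v ᵥ* C with hy
    have hyd : y ᵥ* diagonal w = fun i => y i * w i := by
      funext i; rw [vecMul_diagonal]
    rw [hyd] at h0
    have h0' : ∑ i, w i * (y i * y i) = 0 := by
      rw [← h0]; simp only [dotProduct]; exact Finset.sum_congr rfl fun i _ => by ring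
    have hzero : ∀ i ∈ Finset.univ, w i * (y i * y i) = 0 :=
      (Finset.sum_eq_zero_iff_of_nonneg fun i _ =>
        mul_nonneg (hw i).le (mul_self_nonneg _)).mp h0'
    have hyz : y = 0 := by
      funext i
      have := hzero i (Finset.mem_univ i)
      have : y i * y i = 0 := by
        rcases mul_eq_zero.mp this with h | h
        · exact absurd h (hw i).ne'
        · exact h
      exact mul_self_eq_zero.mp this
    rw [Matrix.mulVec_transpose, ← hy, hyz]
  · rintro ⟨v, hv, hv0⟩
    refine ⟨v, hv, ?_⟩
    rw [← Matrix.mulVec_mulVec, hv0, Matrix.mulVec_zero]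

private lemma cdc_rows (C : Matrix (Fin k) (Fin n) ℝ) (w : Fin n → ℝ) :
    (C * diagonal w * Cᵀ) = Matrix.of fun j => ∑ i : Fin n, (C j i * w i) • (fun l => C l i) := by
  ext j l
  rw [Matrix.mul_apply]
  simp only [Matrix.mul_diagonal, Matrix.transpose_apply, Matrix.of_apply,
    Finset.sum_apply, Pi.smul_apply, smul_eq_mul]

private noncomputable def fiberCoef (C : Matrix (Fin k) (Fin n) ℝ) (S : Finset (Fin n)) : ℝ :=
  ∑ σ ∈ Finset.univ.filter
      (fun σ : Fin k → Fin n => Function.Injective σ ∧ Finset.image σ Finset.univ = S),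
    (∏ j, C j (σ j)) * (Matrix.of fun j l => C l (σ j)).det

private lemma det_cdc_expand (C : Matrix (Fin k) (Fin n) ℝ) (w : Fin n → ℝ) :
    (C * diagonal w * Cᵀ).det
      = ∑ S : Finset (Fin n), fiberCoef C S * ∏ i ∈ S, w i := by
  classical
  have h1 : (C * diagonal w * Cᵀ).det
      = ∑ σ : Fin k → Fin n, (∏ j, (w (σ j))) * ((∏ j, C j (σ j)) *
          (Matrix.of fun j l => C l (σ j)).det) := by
    rw [cdc_rows C w]
    have hdet : (Matrix.of fun j => ∑ i : Fin n, (C j i * w i) • (fun l => C l i)).det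
        = (Matrix.detRowAlternating (R := ℝ) (n := Fin k)).toMultilinearMap
            (fun j => ∑ i : Fin n, (C j i * w i) • (fun l => C l i)) := rfl
    rw [hdet, MultilinearMap.map_sum]
    refine Finset.sum_congr rfl fun σ _ => ?_
    rw [MultilinearMap.map_smul_univ]
    have : (Matrix.detRowAlternating (R := ℝ) (n := Fin k)).toMultilinearMap
        (fun j => (fun l => C l (σ j))) = (Matrix.of fun j l => C l (σ j)).det := rfl
    rw [this, smul_eq_mul, Finset.prod_mul_distrib]
    ring
  rw [h1]
  rw [← Finset.sum_filter_of_ne (p := fun σ : Fin k → Fin n => Function.Injective σ)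
    (fun σ _ hne => by
      by_contra hinj
      obtain ⟨j₁, j₂, heq, hne'⟩ := Function.not_injective_iff.mp hinj
      have : (Matrix.of fun j l => C l (σ j)).det = 0 :=
        Matrix.det_zero_of_row_eq hne' (funext fun l => by simp [heq])
      rw [this, mul_zero, mul_zero] at hne
      exact hne rfl)]
  rw [← Finset.sum_fiberwise_of_maps_to
    (g := fun σ : Fin k → Fin n => Finset.image σ Finset.univ) (t := Finset.univ)
    (fun σ _ => Finset.mem_univ _)]
  refine Finset.sum_congr rfl fun S _ => ?_
  rw [Finset.filter_filter, fiberCoef, Finset.sum_mul]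
  refine Finset.sum_congr rfl fun σ hσ => ?_
  simp only [Finset.mem_filter] at hσ
  obtain ⟨-, hinj, himg⟩ := hσ
  have hprod : ∏ j, w (σ j) = ∏ i ∈ S, w i := by
    rw [← himg, Finset.prod_image fun x _ y _ h => hinj h]
  rw [hprod]; ring

private lemma fiberCoef_eq_zero (C : Matrix (Fin k) (Fin n) ℝ) {S : Finset (Fin n)}
    (h : S.card ≠ k) : fiberCoef C S = 0 := by
  classical
  rw [fiberCoef]
  have : Finset.univ.filter
      (fun σ : Fin k → Fin n => Function.Injective σ ∧ Finset.image σ Finset.univ = S) = ∅ := by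
    refine Finset.filter_eq_empty_iff.mpr fun σ _ => ?_
    rintro ⟨hinj, himg⟩
    apply h
    rw [← himg, Finset.card_image_of_injective _ hinj, Finset.card_univ, Fintype.card_fin]
  rw [this, Finset.sum_empty]

private lemma fiberCoef_nonneg (C : Matrix (Fin k) (Fin n) ℝ) (S : Finset (Fin n)) :
    0 ≤ fiberCoef C S := by
  classical
  by_cases hcard : S.card = k
  · have hP := det_cdc_expand C (fun i => if i ∈ S then 1 else 0)
    have hind : ∀ T : Finset (Fin n),
        (∏ i ∈ T, (if i ∈ S then (1:ℝ) else 0)) = if T ⊆ S then 1 else 0 := by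
      intro T
      by_cases hTS : T ⊆ S
      · rw [if_pos hTS]; exact Finset.prod_eq_one fun i hi => if_pos (hTS hi)
      · rw [if_neg hTS]
        obtain ⟨i, hiT, hiS⟩ := Finset.not_subset.mp hTS
        exact Finset.prod_eq_zero hiT (if_neg hiS)
    have hsum : ∑ T : Finset (Fin n), fiberCoef C T * ∏ i ∈ T, (if i ∈ S then (1:ℝ) else 0)
        = fiberCoef C S := by
      rw [Finset.sum_eq_single S (fun T _ hTS => ?_) (fun h => absurd (Finset.mem_univ _) h),
        hind S, if_pos (Finset.Subset.refl S), mul_one]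
      by_cases hsub : T ⊆ S
      · have hss : T ⊂ S := lt_of_le_of_ne hsub hTS
        have : T.card < k := hcard ▸ Finset.card_lt_card hss
        rw [fiberCoef_eq_zero C this.ne, zero_mul]
      · rw [hind T, if_neg hsub, mul_zero]
    calc (0:ℝ) ≤ (C * diagonal (fun i => if i ∈ S then (1:ℝ) else 0) * Cᵀ).det :=
          psd_det_nonneg (psd_cdc C fun i => by positivity)
      _ = fiberCoef C S := by rw [hP, hsum]
  · rw [fiberCoef_eq_zero C hcard]

end BLAux

private lemma convexOn_log_sumexp {ι : Type} [Fintype ι] (a c : ι → ℝ)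
    (ha : ∀ i, 0 ≤ a i) (hpos : ∀ t : ℝ, 0 < ∑ i, a i * Real.exp (t * c i)) :
    ConvexOn ℝ Set.univ (fun t : ℝ => Real.log (∑ i, a i * Real.exp (t * c i))) := by
  set F : ℝ → ℝ := fun t => ∑ i, a i * Real.exp (t * c i) with hF
  refine ⟨convex_univ, fun x _ y _ lam mu hl hm hlm => ?_⟩
  simp only [smul_eq_mul]
  rcases eq_or_lt_of_le hl with h0 | hl'
  · have hmu : mu = 1 := by linarith
    simp [← h0, hmu]
  rcases eq_or_lt_of_le hm with h0 | hm'
  · have hlam : lam = 1 := by linarith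
    simp [← h0, hlam]
  have hFx := hpos x
  have hFy := hpos y
  have key : F (lam * x + mu * y) ≤ F x ^ lam * F y ^ mu := by
    have step1 : F (lam * x + mu * y)
        = ∑ i, (a i * Real.exp (x * c i)) ^ lam * (a i * Real.exp (y * c i)) ^ mu := by
      refine Finset.sum_congr rfl fun i _ => ?_
      rcases (ha i).eq_or_lt with h | h
      · rw [← h]; simp [Real.zero_rpow hl'.ne', Real.zero_rpow hm'.ne']
      · rw [Real.mul_rpow h.le (Real.exp_pos _).le, Real.mul_rpow h.le (Real.exp_pos _).le]
        have hexp : ∀ z w : ℝ, Real.exp z ^ w = Real.exp (z * w) := fun z w => by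
          rw [Real.rpow_def_of_pos (Real.exp_pos _), Real.log_exp]
        rw [hexp, hexp]
        have haa : a i ^ lam * a i ^ mu = a i := by
          rw [← Real.rpow_add h, hlm, Real.rpow_one]
        calc a i * Real.exp ((lam * x + mu * y) * c i)
            = (a i ^ lam * a i ^ mu) * Real.exp (x * c i * lam + y * c i * mu) := by
              rw [haa]; ring_nf
          _ = a i ^ lam * Real.exp (x * c i * lam) * (a i ^ mu * Real.exp (y * c i * mu)) := by
              rw [Real.exp_add]; ring
    have step2 : ∑ i, (a i * Real.exp (x * c i)) ^ lam * (a i * Real.exp (y * c i)) ^ mu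
        ≤ ∑ i, F x ^ lam * F y ^ mu *
            (lam * ((a i * Real.exp (x * c i)) / F x) + mu * ((a i * Real.exp (y * c i)) / F y)) := by
      refine Finset.sum_le_sum fun i _ => ?_
      set u := a i * Real.exp (x * c i) with hu
      set v := a i * Real.exp (y * c i) with hv
      have hu0 : 0 ≤ u := mul_nonneg (ha i) (Real.exp_pos _).le
      have hv0 : 0 ≤ v := mul_nonneg (ha i) (Real.exp_pos _).le
      have hgm := Real.geom_mean_le_arith_mean2_weighted hl hm
        (div_nonneg hu0 hFx.le) (div_nonneg hv0 hFy.le) hlm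
      have heq : (u / F x) ^ lam * (v / F y) ^ mu
          = u ^ lam * v ^ mu / (F x ^ lam * F y ^ mu) := by
        rw [Real.div_rpow hu0 hFx.le, Real.div_rpow hv0 hFy.le]
        ring
      rw [heq] at hgm
      have hfac : 0 < F x ^ lam * F y ^ mu :=
        mul_pos (Real.rpow_pos_of_pos hFx _) (Real.rpow_pos_of_pos hFy _)
      calc u ^ lam * v ^ mu
          = F x ^ lam * F y ^ mu * (u ^ lam * v ^ mu / (F x ^ lam * F y ^ mu)) := by
            rw [mul_div_assoc', mul_div_cancel_left₀ _ hfac.ne']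
        _ ≤ F x ^ lam * F y ^ mu * (lam * (u / F x) + mu * (v / F y)) :=
            mul_le_mul_of_nonneg_left hgm hfac.le
    have step3 : ∑ i, F x ^ lam * F y ^ mu *
            (lam * ((a i * Real.exp (x * c i)) / F x) + mu * ((a i * Real.exp (y * c i)) / F y))
        = F x ^ lam * F y ^ mu := by
      rw [← Finset.mul_sum]
      have : ∑ i, (lam * ((a i * Real.exp (x * c i)) / F x)
          + mu * ((a i * Real.exp (y * c i)) / F y)) = lam + mu := by
        rw [Finset.sum_add_distrib]
        simp only [div_eq_mul_inv, ← Finset.mul_sum, ← Finset.sum_mul]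
        show lam * (F x * (F x)⁻¹) + mu * (F y * (F y)⁻¹) = lam + mu
        rw [mul_inv_cancel₀ hFx.ne', mul_inv_cancel₀ hFy.ne', mul_one, mul_one]
      rw [this, hlm, mul_one]
    calc F (lam * x + mu * y) = _ := step1
      _ ≤ _ := step2
      _ = _ := step3
  calc Real.log (F (lam * x + mu * y)) ≤ Real.log (F x ^ lam * F y ^ mu) :=
        Real.log_le_log (hpos _) key
    _ = lam * Real.log (F x) + mu * Real.log (F y) := by
        rw [Real.log_mul (Real.rpow_pos_of_pos hFx _).ne' (Real.rpow_pos_of_pos hFy _).ne',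
          Real.log_rpow hFx, Real.log_rpow hFy]

private lemma convexOn_finsetSum {ι : Type*} (s : Finset ι) (g : ι → ℝ → ℝ)
    (h : ∀ j ∈ s, ConvexOn ℝ Set.univ (g j)) :
    ConvexOn ℝ Set.univ (fun t => ∑ j ∈ s, g j t) := by
  classical
  induction s using Finset.induction_on with
  | empty => simpa using convexOn_const (0:ℝ) convex_univ
  | @insert a s' hx ih =>
    simp only [Finset.sum_insert hx]
    exact (h a (Finset.mem_insert_self _ _)).add
      (ih fun j hj => h j (Finset.mem_insert_of_mem hj))

private lemma convexOn_affine (a b : ℝ) :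
    ConvexOn ℝ Set.univ (fun t : ℝ => a + b * t) := by
  refine ⟨convex_univ, fun x _ y _ lam mu hl hm hlm => ?_⟩
  simp only [smul_eq_mul]
  refine le_of_eq ?_
  have : lam = 1 - mu := by linarith
  rw [this]; ring

variable {n : ℕ}

private lemma sqrt_transpose_aux {P : Matrix (Fin n) (Fin n) ℝ} (hP : P.PosSemidef) :
    (hP.sqrt)ᵀ = hP.sqrt := by
  rw [← conjTranspose_eq_transpose_of_trivial, Matrix.PosSemidef.sqrt]
  simp [Matrix.mul_assoc, Matrix.star_eq_conjTranspose, conjTranspose_eq_transpose_of_trivial]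
private lemma sqrt_mul_self_aux {P : Matrix (Fin n) (Fin n) ℝ} (hP : P.PosSemidef) :
    hP.sqrt * hP.sqrt = P := by
  have hU1 : star (hP.1.eigenvectorUnitary : Matrix (Fin n) (Fin n) ℝ)
      * (hP.1.eigenvectorUnitary : Matrix (Fin n) (Fin n) ℝ) = 1 :=
    mem_unitaryGroup_iff'.mp hP.1.eigenvectorUnitary.2
  have hspec := hP.1.spectral_theorem
  simp only [Unitary.conjStarAlgAut_apply, RCLike.ofReal_real_eq_id, Function.id_comp] at hspec
  rw [Matrix.PosSemidef.sqrt]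
  conv_rhs => rw [hspec]
  simp only [Matrix.mul_assoc]
  rw [← Matrix.mul_assoc (star _) (_ : Matrix (Fin n) (Fin n) ℝ), hU1, Matrix.one_mul,
    ← Matrix.mul_assoc (diagonal _), diagonal_mul_diagonal]
  congr 2
  refine congrArg diagonal (funext fun i => ?_)
  simp [Real.mul_self_sqrt (hP.eigenvalues_nonneg i)]

private lemma exp_smul_symm (Q : Matrix (Fin n) (Fin n) ℝ) (hQ : Q.IsSymm) :
    ∃ (U : Matrix (Fin n) (Fin n) ℝ) (d : Fin n → ℝ), U * star U = 1 ∧ star U * U = 1 ∧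
      ∀ t : ℝ, NormedSpace.exp (t • Q)
        = U * diagonal (fun i => Real.exp (t * d i)) * star U := by
  have hQH : Q.IsHermitian := by
    rwa [Matrix.IsHermitian, conjTranspose_eq_transpose_of_trivial]
  set U : Matrix (Fin n) (Fin n) ℝ := (hQH.eigenvectorUnitary : Matrix (Fin n) (Fin n) ℝ)
    with hU
  have h1 : U * star U = 1 := mem_unitaryGroup_iff.mp hQH.eigenvectorUnitary.2
  have h2 : star U * U = 1 := mem_unitaryGroup_iff'.mp hQH.eigenvectorUnitary.2
  have hUinv : U⁻¹ = star U := inv_eq_right_inv h1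
  have hUnit : IsUnit U := ⟨⟨U, star U, h1, h2⟩, rfl⟩
  refine ⟨U, hQH.eigenvalues, h1, h2, fun t => ?_⟩
  have hspec : Q = U * diagonal hQH.eigenvalues * star U := by
    have h := hQH.spectral_theorem
    simp only [Unitary.conjStarAlgAut_apply, RCLike.ofReal_real_eq_id, Function.id_comp] at h
    exact h
  have hsm : t • Q = U * diagonal (fun i => t * hQH.eigenvalues i) * U⁻¹ := by
    conv_lhs => rw [hspec]
    rw [hUinv, ← smul_mul_assoc, ← mul_smul_comm, ← diagonal_smul]
    rfl
  rw [hsm, Matrix.exp_conj _ _ hUnit, Matrix.exp_diagonal, hUinv]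
  congr 1
  congr 1
  rw [Pi.exp_def]
  funext i
  rw [← Real.exp_eq_exp_ℝ]

private lemma convexOn_c_logdet {k n : ℕ} (C : Matrix (Fin k) (Fin n) ℝ) (d : Fin n → ℝ)
    (c : ℝ) (hc : 0 ≤ c) :
    ConvexOn ℝ Set.univ
      (fun t : ℝ => c * Real.log ((C * diagonal (fun i => Real.exp (t * d i)) * Cᵀ).det)) := by
  by_cases hdeg : ∃ v, v ≠ 0 ∧ Cᵀ *ᵥ v = 0
  · have hz : ∀ t : ℝ, (C * diagonal (fun i => Real.exp (t * d i)) * Cᵀ).det = 0 := fun t =>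
      (det_cdc_eq_zero_iff C (fun i => Real.exp_pos _)).mpr hdeg
    have heq : (fun t : ℝ => c * Real.log ((C * diagonal (fun i => Real.exp (t * d i)) * Cᵀ).det))
        = fun _ => (0:ℝ) := funext fun t => by rw [hz t, Real.log_zero, mul_zero]
    rw [heq]
    exact convexOn_const _ convex_univ
  · have hpos : ∀ t : ℝ, 0 < (C * diagonal (fun i => Real.exp (t * d i)) * Cᵀ).det := by
      intro t
      have h0 := psd_det_nonneg (psd_cdc C fun i => (Real.exp_pos ((t * d i))).le)
      rcases h0.eq_or_lt with h | h
      · exact absurd ((det_cdc_eq_zero_iff C fun i => Real.exp_pos _).mp h.symm) hdeg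
      · exact h
    have hFG : ∀ t : ℝ, (C * diagonal (fun i => Real.exp (t * d i)) * Cᵀ).det
        = ∑ S : Finset (Fin n), fiberCoef C S * Real.exp (t * ∑ i ∈ S, d i) := by
      intro t
      rw [det_cdc_expand]
      refine Finset.sum_congr rfl fun S _ => ?_
      rw [← Real.exp_sum, ← Finset.mul_sum]
    have hpos' : ∀ t : ℝ, 0 < ∑ S : Finset (Fin n), fiberCoef C S * Real.exp (t * ∑ i ∈ S, d i) :=
      fun t => hFG t ▸ hpos t
    have hconv := convexOn_log_sumexp (fiberCoef C) (fun S => ∑ i ∈ S, d i)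
      (fiberCoef_nonneg C) hpos'
    have h2 : ConvexOn ℝ Set.univ
        (fun t : ℝ => Real.log ((C * diagonal (fun i => Real.exp (t * d i)) * Cᵀ).det)) := by
      rw [show (fun t : ℝ => Real.log ((C * diagonal (fun i => Real.exp (t * d i)) * Cᵀ).det))
          = (fun t : ℝ => Real.log (∑ S : Finset (Fin n),
              fiberCoef C S * Real.exp (t * ∑ i ∈ S, d i)))
        from funext fun t => by rw [hFG t]]
      exact hconv
    exact h2.smul hc

/-- geodesic convexity of the Brascamp–Lieb objective.  For a
non-degenerate Brascamp–Lieb datum `(B, p)` (with `n = Σⱼ pⱼ·nⱼ` and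
`n = Σⱼ pⱼ·rank(Bⱼ)`), the function
`F_{B,p}(X) = Σⱼ pⱼ·log det(Bⱼ·X·Bⱼᵀ) − log det X` is geodesically convex on the
positive definite cone: its restriction to every geodesic
`γ(t) = √P · exp(t·Q) · √P` is convex on `ℝ`. -/
theorem brascamp_lieb_objective_gconvex (n m : ℕ) (nj : Fin m → ℕ)
    (B : ∀ j : Fin m, Matrix (Fin (nj j)) (Fin n) ℝ) (p : Fin m → ℝ)
    (hp : ∀ j, 0 < p j)
    (hdim : (n : ℝ) = ∑ j, p j * (nj j : ℝ))
    (hrank : (n : ℝ) = ∑ j, p j * ((B j).rank : ℝ))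
    (P Q : Matrix (Fin n) (Fin n) ℝ) (hP : P.PosDef) (hQ : Q.IsSymm) :
    ConvexOn ℝ Set.univ
      (fun t : ℝ =>
        (∑ j, p j *
            Real.log
              (B j * (hP.posSemidef.sqrt * NormedSpace.exp (t • Q) * hP.posSemidef.sqrt)
                * (B j)ᵀ).det)
        - Real.log
            (hP.posSemidef.sqrt * NormedSpace.exp (t • Q) * hP.posSemidef.sqrt).det) := by
  classical
  obtain ⟨U, d, h1, h2, hexp⟩ := exp_smul_symm Q hQ
  set Sq : Matrix (Fin n) (Fin n) ℝ := hP.posSemidef.sqrt with hSqdef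
  have hSqT : Sqᵀ = Sq := by
    exact sqrt_transpose_aux hP.posSemidef
  have hstarU : star U = Uᵀ := by
    rw [Matrix.star_eq_conjTranspose, conjTranspose_eq_transpose_of_trivial]
  set C : ∀ j : Fin m, Matrix (Fin (nj j)) (Fin n) ℝ := fun j => B j * (Sq * U) with hCdef
  have hXt : ∀ t : ℝ, Sq * NormedSpace.exp (t • Q) * Sq
      = (Sq * U) * diagonal (fun i => Real.exp (t * d i)) * (Sq * U)ᵀ := by
    intro t
    rw [hexp t, transpose_mul, hSqT, ← hstarU]
    simp only [Matrix.mul_assoc]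
  have hBX : ∀ (j : Fin m) (t : ℝ),
      B j * (Sq * NormedSpace.exp (t • Q) * Sq) * (B j)ᵀ
        = C j * diagonal (fun i => Real.exp (t * d i)) * (C j)ᵀ := by
    intro j t
    rw [hXt t, hCdef]
    simp only [transpose_mul]
    simp only [Matrix.mul_assoc]
  have hdetX : ∀ t : ℝ, (Sq * NormedSpace.exp (t • Q) * Sq).det
      = P.det * Real.exp (t * ∑ i, d i) := by
    intro t
    have hUU : U.det * (star U).det = 1 := by rw [← det_mul, h1, det_one]
    have hSqSq : Sq.det * Sq.det = P.det := by
      rw [← det_mul, hSqdef, sqrt_mul_self_aux hP.posSemidef]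
    have hDD : (diagonal (fun i => Real.exp (t * d i))).det = Real.exp (t * ∑ i, d i) := by
      rw [det_diagonal, ← Real.exp_sum, ← Finset.mul_sum]
    rw [hexp t, det_mul, det_mul, det_mul, det_mul, hDD, ← hSqSq]
    linear_combination (Sq.det * Sq.det * Real.exp (t * ∑ i, d i)) * hUU
  have hlogX : ∀ t : ℝ,
      Real.log ((Sq * NormedSpace.exp (t • Q) * Sq).det)
        = Real.log P.det + t * ∑ i, d i := by
    intro t
    rw [hdetX t, Real.log_mul hP.det_pos.ne' (Real.exp_pos _).ne', Real.log_exp]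
  have hfun : (fun t : ℝ =>
        (∑ j, p j *
            Real.log
              (B j * (Sq * NormedSpace.exp (t • Q) * Sq) * (B j)ᵀ).det)
        - Real.log ((Sq * NormedSpace.exp (t • Q) * Sq).det))
      = fun t : ℝ =>
        (∑ j, p j * Real.log ((C j * diagonal (fun i => Real.exp (t * d i)) * (C j)ᵀ).det))
        + (-Real.log P.det + (-(∑ i, d i)) * t) := by
    funext t
    rw [hlogX t, Finset.sum_congr rfl fun j _ => by rw [hBX j t]]
    ring
  rw [hfun]
  refine ConvexOn.add ?_ ?_
  · exact convexOn_finsetSum _ _ fun j _ => convexOn_c_logdet (C j) d (p j) (hp j).le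
  · exact convexOn_affine _ _
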